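/- (Proposition 1) In the abstract two-stage dispatch setting, assume: (i) X w ⊆ Xfull for every w ∈ 𝒲; (ii) the mean-forecast bid satisfies w̄ ∈ 𝒲, φ̄ ∈ X w̄, and φ̄ minimizes f over X w̄; and (iii) the value set {f φ + R φ | φ ∈ Xfull} is bounded below. Then the expected system costs of the three dispatch frameworks satisfy S^StD ≤ S^BiD ≤ S^MyD. -/

import Mathlib

section

variable {Φ W : Type*}

def bilevelFeasible (𝒲 : Set W) (X : W → Set Φ) (f : Φ → ℝ) : Set Φ :=
  {φ | ∃ w ∈ 𝒲, φ ∈ X w ∧ ∀ ψ ∈ X w, f φ ≤ f ψ}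

theorem bilevelFeasible_subset {𝒲 : Set W} {X : W → Set Φ} {Xfull : Set Φ} (f : Φ → ℝ)
    (hsub : ∀ w ∈ 𝒲, X w ⊆ Xfull) : bilevelFeasible 𝒲 X f ⊆ Xfull := by
  rintro φ ⟨w, hw, hφ, -⟩
  exact hsub w hw hφ

end

theorem sInf_le_sInf_le_apply_of_subset {α : Type*} {s t : Set α} (g : α → ℝ) (hst : s ⊆ t)
    (hbdd : BddBelow {r | ∃ a ∈ t, r = g a}) {a : α} (ha : a ∈ s) :
    sInf {r | ∃ a ∈ t, r = g a} ≤ sInf {r | ∃ a ∈ s, r = g a} ∧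
      sInf {r | ∃ a ∈ s, r = g a} ≤ g a := by
  have hvalues : {r | ∃ a ∈ s, r = g a} ⊆ {r | ∃ a ∈ t, r = g a} := by
    rintro r ⟨b, hb, rfl⟩
    exact ⟨b, hst hb, rfl⟩
  have hmem : g a ∈ {r | ∃ a ∈ s, r = g a} := ⟨a, ha, rfl⟩
  exact ⟨csInf_le_csInf hbdd ⟨_, hmem⟩ hvalues, csInf_le (hbdd.mono hvalues) hmem⟩

/-- Proposition 1: the expected system costs of the three dispatch frameworks
satisfy `S^StD ≤ S^BiD ≤ S^MyD`. -/
theorem system_cost_comparison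
    {Φ W : Type*} (𝒲 : Set W) (X : W → Set Φ) (Xfull : Set Φ)
    (f R : Φ → ℝ)
    (hsub : ∀ w ∈ 𝒲, X w ⊆ Xfull)
    (wbar : W) (φbar : Φ)
    (hwbar : wbar ∈ 𝒲) (hφbar : φbar ∈ X wbar)
    (hmin : ∀ φ ∈ X wbar, f φbar ≤ f φ)
    (hbdd : BddBelow {r | ∃ φ ∈ Xfull, r = f φ + R φ}) :
    sInf {r | ∃ φ ∈ Xfull, r = f φ + R φ} ≤
      sInf {r | ∃ φ, (∃ w ∈ 𝒲, φ ∈ X w ∧ ∀ ψ ∈ X w, f φ ≤ f ψ) ∧ r = f φ + R φ} ∧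
    sInf {r | ∃ φ, (∃ w ∈ 𝒲, φ ∈ X w ∧ ∀ ψ ∈ X w, f φ ≤ f ψ) ∧ r = f φ + R φ} ≤
      f φbar + R φbar :=
  have hφbar_mem : φbar ∈ bilevelFeasible 𝒲 X f := ⟨wbar, hwbar, hφbar, hmin⟩
  sInf_le_sInf_le_apply_of_subset (fun φ => f φ + R φ) (bilevelFeasible_subset f hsub) hbdd
    hφbar_mem
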